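/- arXiv:1301.1611 — 3 statements merged into one kernel-verified Lean document; each statement's English description precedes it below -/
import Mathlib

section
/- Let E and F be Banach spaces and T a closed densely defined unbounded operator from E to F, with transpose (adjoint) operator T' from the dual F' to the dual E'. Then the closure of the range of T equals the polar (pre-annihilator) of the kernel of T', i.e. the set of x in F such that ŌÉ(x) = 0 for every ŌÉ in ker T'. -/
/-!
A continuous functional vanishing on `range T` lies in the domain of `T'` (with `T' σ = 0` on
the dense set `Dom T`, hence everywhere), and conversely; so `ker T'` is exactly the annihilator
of `range T`. The polar of the annihilator of a subspace is its closure, by Hahn–Banach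
separation of a point from the closed subspace.
-/

/-- `T'` is the transpose (Banach-space adjoint) of the densely defined unbounded operator
`T` from `E` to `F`: the domain of `T'` consists of those continuous linear functionals
`sigma` in `F'` for which `x mapsto sigma (T x)` is continuous on `Dom T`, i.e. extends to a
continuous functional `tau` in `E'`, and then `T' sigma = tau` (such a `tau` is unique since
`Dom T` is dense in `E`). -/
structure IsTranspose {E F : Type*} [NormedAddCommGroup E] [NormedSpace ℝ E]
    [NormedAddCommGroup F] [NormedSpace ℝ F]
    (T : E →ₗ.[ℝ] F) (T' : StrongDual ℝ F →ₗ.[ℝ] StrongDual ℝ E) : Prop where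
  mem_domain_iff : ∀ sigma : StrongDual ℝ F,
    sigma ∈ T'.domain ↔
      ∃ tau : StrongDual ℝ E, ∀ x : T.domain, tau (x : E) = sigma (T x)
  apply_eq : ∀ (sigma : T'.domain) (x : T.domain),
    (T' sigma) (x : E) = (sigma : StrongDual ℝ F) (T x)

theorem LinearMap.eq_zero_of_forall_mem_lt {V : Type*} [AddCommGroup V] [Module ℝ V]
    (f : V →ₗ[ℝ] ℝ) (S : Submodule ℝ V) {u : ℝ} (hf : ∀ a ∈ S, f a < u) {a : V} (ha : a ∈ S) :
    f a = 0 := by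
  by_contra hfa
  have := hf ((u / f a) • a) (S.smul_mem _ ha)
  rw [map_smul, smul_eq_mul, div_mul_cancel₀ _ hfa] at this
  exact lt_irrefl u this

theorem Submodule.mem_closure_iff_forall_strongDual {V : Type*} [AddCommGroup V] [Module ℝ V]
    [TopologicalSpace V] [IsTopologicalAddGroup V] [ContinuousSMul ℝ V] [LocallyConvexSpace ℝ V]
    (S : Submodule ℝ V) (y : V) :
    y ∈ closure (S : Set V) ↔ ∀ f : StrongDual ℝ V, (∀ a ∈ S, f a = 0) → f y = 0 := by
  refine ⟨fun hy f hf => closure_minimal hf f.isClosed_ker hy, fun h => ?_⟩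
  by_contra hy
  obtain ⟨f, u, hlt, hu⟩ := geometric_hahn_banach_closed_point
    S.topologicalClosure.convex S.isClosed_topologicalClosure hy
  have hS : ∀ a ∈ S, f a = 0 := fun a ha =>
    (f : V →ₗ[ℝ] ℝ).eq_zero_of_forall_mem_lt S.topologicalClosure hlt (S.le_topologicalClosure ha)
  have hu0 : 0 < u := by simpa using hlt 0 S.topologicalClosure.zero_mem
  linarith [h f hS]

namespace IsTranspose

variable {E F : Type*} [NormedAddCommGroup E] [NormedSpace ℝ E]
  [NormedAddCommGroup F] [NormedSpace ℝ F]
  {T : E →ₗ.[ℝ] F} {T' : StrongDual ℝ F →ₗ.[ℝ] StrongDual ℝ E}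

theorem exists_mem_ker_iff (hT' : IsTranspose T T') (hTdense : Dense (T.domain : Set E))
    (σ : StrongDual ℝ F) :
    (∃ s : T'.domain, (s : StrongDual ℝ F) = σ ∧ T' s = 0) ↔ ∀ x : T.domain, σ (T x) = 0 := by
  constructor
  · rintro ⟨s, rfl, hs⟩ x
    rw [← hT'.apply_eq, hs, zero_apply]
  · intro hσ
    have hmem : σ ∈ T'.domain := (hT'.mem_domain_iff σ).2 ⟨0, fun x => (hσ x).symm⟩
    refine ⟨⟨σ, hmem⟩, rfl, ?_⟩
    refine ContinuousLinearMap.ext_on (hTdense.mono Submodule.subset_span) fun x hx => ?_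
    rw [hT'.apply_eq ⟨σ, hmem⟩ ⟨x, hx⟩, zero_apply]
    exact hσ ⟨x, hx⟩

end IsTranspose

theorem closure_range_eq_polar_ker_transpose_general
    {E F : Type*} [NormedAddCommGroup E] [NormedSpace ℝ E]
    [NormedAddCommGroup F] [NormedSpace ℝ F]
    (T : E →ₗ.[ℝ] F) (hTdense : Dense (T.domain : Set E))
    (T' : StrongDual ℝ F →ₗ.[ℝ] StrongDual ℝ E)
    (hT' : IsTranspose T T') :
    closure (Set.range fun x : T.domain => T x)
      = {y : F | ∀ sigma : T'.domain, T' sigma = 0 →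
          (sigma : StrongDual ℝ F) y = 0} := by
  have hrange : (Set.range fun x : T.domain => T x) = (LinearMap.range T.toFun : Set F) := rfl
  ext y
  rw [hrange, Submodule.mem_closure_iff_forall_strongDual]
  constructor
  · intro h σ hσ
    refine h σ ?_
    rintro _ ⟨x, rfl⟩
    exact (hT'.exists_mem_ker_iff hTdense σ).1 ⟨σ, rfl, hσ⟩ x
  · intro h σ hσ
    obtain ⟨s, rfl, hs⟩ := (hT'.exists_mem_ker_iff hTdense σ).2 fun x => hσ _ ⟨x, rfl⟩
    exact h s hs

/-- Let `E` and `F` be Banach spaces and `T` a closed densely defined unbounded operator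
from `E` to `F`, with transpose `T' : F' → E'`.  Then the closure of the range of `T`
equals the polar (pre-annihilator) of the kernel of `T'`, i.e. the set of `y` in `F` such
that `sigma y = 0` for every `sigma` in `ker T'`. -/
theorem closure_range_eq_polar_ker_transpose
    {E F : Type*} [NormedAddCommGroup E] [NormedSpace ℝ E] [CompleteSpace E]
    [NormedAddCommGroup F] [NormedSpace ℝ F] [CompleteSpace F]
    (T : E →ₗ.[ℝ] F) (hTclosed : T.IsClosed) (hTdense : Dense (T.domain : Set E))
    (T' : StrongDual ℝ F →ₗ.[ℝ] StrongDual ℝ E)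
    (hT' : IsTranspose T T') :
    closure (Set.range fun x : T.domain => T x)
      = {y : F | ∀ sigma : T'.domain, T' sigma = 0 →
          (sigma : StrongDual ℝ F) y = 0} :=
  closure_range_eq_polar_ker_transpose_general T hTdense T' hT'
end

section
/- Let (E^‚ÄĘ, d) be a cohomological complex of Banach spaces (closed densely defined operators d^q : E^q ‚áĎ E^{q+1} with d^{q+1} ‚ąė d^q = 0) and let (E'_‚ÄĘ, d') be its dual homological complex. If the homology group H_{q+1}(E'_‚ÄĘ) = ker d'_q / im d'_{q+1} vanishes, then the cohomology group H^{q+1}(E^‚ÄĘ) = ker d^{q+1} / im d^q is either zero or non-Hausdorff (i.e. if im d^q is closed, then H^{q+1}(E^‚ÄĘ) = 0). -/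
theorem Submodule.exists_dual_le_ker_of_isClosed_of_notMem {𝕜 E : Type*} [RCLike 𝕜]
    [NormedAddCommGroup E] [NormedSpace 𝕜 E] {p : Submodule 𝕜 E}
    (hp : IsClosed (p : Set E)) {v : E} (hv : v ∉ p) :
    ∃ f : StrongDual 𝕜 E, f v ≠ 0 ∧ p ≤ LinearMap.ker (f : E →ₗ[𝕜] 𝕜) := by
  have hv' : p.mkQL v ≠ 0 := by
    simpa [Submodule.Quotient.mk_eq_zero] using hv
  obtain ⟨g, hg⟩ := SeparatingDual.exists_ne_zero (R := 𝕜) hv'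
  refine ⟨g.comp p.mkQL, hg, fun x hx => ?_⟩
  simp [(Submodule.Quotient.mk_eq_zero p).mpr hx]

namespace IsTranspose

variable {E F : Type*} [NormedAddCommGroup E] [NormedSpace ℝ E]
  [NormedAddCommGroup F] [NormedSpace ℝ F]
  {T : E →ₗ.[ℝ] F} {T' : StrongDual ℝ F →ₗ.[ℝ] StrongDual ℝ E}

theorem mem_domain_of_forall_apply_eq_zero (hT : IsTranspose T T') {σ : StrongDual ℝ F}
    (hσ : ∀ x : T.domain, σ (T x) = 0) : σ ∈ T'.domain :=
  (hT.mem_domain_iff σ).mpr ⟨0, fun x => (hσ x).symm⟩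

theorem apply_eq_zero_of_forall_apply_eq_zero (hT : IsTranspose T T')
    (hdense : Dense (T.domain : Set E)) (σ : T'.domain)
    (hσ : ∀ x : T.domain, (σ : StrongDual ℝ F) (T x) = 0) : T' σ = 0 :=
  DFunLike.coe_injective <|
    Continuous.ext_on hdense (T' σ).continuous continuous_zero fun x hx => by
      simpa [hσ ⟨x, hx⟩] using hT.apply_eq σ ⟨x, hx⟩

theorem apply_apply_eq_zero_of_apply_eq_zero (hT : IsTranspose T T') (τ : T'.domain)
    {x : T.domain} (hx : T x = 0) : T' τ x = 0 := by
  rw [hT.apply_eq, hx, map_zero]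

end IsTranspose

theorem cohomology_zero_or_nonseparated_general
    (E : ℤ → Type*) [∀ q, NormedAddCommGroup (E q)]
    [∀ q, NormedSpace ℝ (E q)]
    (d : ∀ q : ℤ, E q →ₗ.[ℝ] E (q+1))
    (hdd : ∀ q, Dense ((d q).domain : Set (E q)))
    (d' : ∀ q : ℤ,
      StrongDual ℝ (E (q+1)) →ₗ.[ℝ] StrongDual ℝ (E q))
    (hd' : ∀ q, IsTranspose (d q) (d' q)) (q : ℤ)
    (hvanish : ∀ sigma : (d' q).domain, (d' q) sigma = 0 →
      ∃ tau : (d' (q+1)).domain,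
        (d' (q+1)) tau = (sigma : StrongDual ℝ (E (q+1))))
    (hclosed : IsClosed (Set.range fun x : (d q).domain => (d q) x)) :
    ∀ y : (d (q+1)).domain, (d (q+1)) y = 0 →
      ∃ x : (d q).domain, (d q) x = (y : E (q+1)) := by
  intro y hy
  by_contra! hy_notMem
  obtain ⟨σ, hσy, hσ⟩ := Submodule.exists_dual_le_ker_of_isClosed_of_notMem
    (p := LinearMap.range (d q).toFun) hclosed fun ⟨x, hx⟩ => hy_notMem x hx
  have hσd : ∀ x : (d q).domain, σ (d q x) = 0 := fun x => hσ ⟨x, rfl⟩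
  have hσ_mem := (hd' q).mem_domain_of_forall_apply_eq_zero hσd
  obtain ⟨τ, hτ⟩ := hvanish ⟨σ, hσ_mem⟩
    ((hd' q).apply_eq_zero_of_forall_apply_eq_zero (hdd q) _ hσd)
  apply hσy
  rw [show σ = d' (q+1) τ from hτ.symm]
  exact (hd' (q+1)).apply_apply_eq_zero_of_apply_eq_zero τ hy

/-- Let `(E^bullet, d)` be a cohomological complex of Banach spaces (closed densely defined
operators `d^q : E^q → E^(q+1)` with `d^(q+1) comp d^q = 0`) and let `(E'_bullet, d')`
be its dual homological complex, `d'_q` being the transpose of `d^q`.  If the homology group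
`H_(q+1)(E') = ker d'_q / im d'_(q+1)` vanishes, then the cohomology group
`H^(q+1)(E) = ker d^(q+1) / im d^q` is either zero or non-Hausdorff: if the image of `d^q`
is closed, then every element of `ker d^(q+1)` lies in the range of `d^q`. -/
theorem cohomology_zero_or_nonseparated
    (E : ℤ → Type*) [∀ q, NormedAddCommGroup (E q)]
    [∀ q, NormedSpace ℝ (E q)] [∀ q, CompleteSpace (E q)]
    (d : ∀ q : ℤ, E q →ₗ.[ℝ] E (q+1))
    (hdc : ∀ q, (d q).IsClosed) (hdd : ∀ q, Dense ((d q).domain : Set (E q)))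
    (hcomp : ∀ (q : ℤ) (x : (d q).domain) (hx : (d q) x ∈ (d (q+1)).domain),
      (d (q+1)) ⟨(d q) x, hx⟩ = 0)
    (d' : ∀ q : ℤ,
      StrongDual ℝ (E (q+1)) →ₗ.[ℝ] StrongDual ℝ (E q))
    (hd' : ∀ q, IsTranspose (d q) (d' q)) (q : ℤ)
    (hvanish : ∀ sigma : (d' q).domain, (d' q) sigma = 0 →
      ∃ tau : (d' (q+1)).domain,
        (d' (q+1)) tau = (sigma : StrongDual ℝ (E (q+1))))
    (hclosed : IsClosed (Set.range fun x : (d q).domain => (d q) x)) :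
    ∀ y : (d (q+1)).domain, (d (q+1)) y = 0 →
      ∃ x : (d q).domain, (d q) x = (y : E (q+1)) :=
  cohomology_zero_or_nonseparated_general E d hdd d' hd' q hvanish hclosed
end

section
/- Let (E^‚ÄĘ, d) and (E'_‚ÄĘ, d') be dual complexes of reflexive Banach spaces with closed densely defined operators. If H_q(E'_‚ÄĘ) is Hausdorff (the range of d'_q is closed) and H_{q+1}(E'_‚ÄĘ) = 0, then H^{q+1}(E^‚ÄĘ) = 0; that is, every element of ker d^{q+1} lies in the range of d^q. -/
/-! For `y ∈ ker d^{q+1}`, the functional `d'_q σ ↦ σ y` is well defined on `im d'_q`: an element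
of `ker d'_q` is `d'_{q+1} τ`, and `(d'_{q+1} τ) y = τ (d^{q+1} y) = 0`. The transpose `d'_q` has
closed graph, so when `im d'_q` is closed the open mapping theorem makes this functional
continuous; Hahn–Banach and reflexivity then give `x` with `(d'_q σ) x = σ y` for every `σ`.
A functional vanishing on the closed graph of `d^q` has the form `(-d'_q σ, σ)`, hence also
vanishes at `(x, y)`, and Hahn–Banach puts `(x, y)` in the graph: `d^q x = y`. -/

theorem Submodule.mem_of_forall_strongDual_eq_zero {𝕜 E : Type*} [RCLike 𝕜]
    [NormedAddCommGroup E] [NormedSpace 𝕜 E] {p : Submodule 𝕜 E} (hp : IsClosed (p : Set E))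
    {x : E} (h : ∀ f : StrongDual 𝕜 E, (∀ a ∈ p, f a = 0) → f x = 0) : x ∈ p := by
  have : IsClosed (p : Set E) := hp
  rw [← Submodule.Quotient.mk_eq_zero]
  refine SeparatingDual.eq_zero_of_forall_dual_eq_zero (R := 𝕜) fun g => ?_
  exact h (g.comp p.mkQL) fun a ha => by simp [(Submodule.Quotient.mk_eq_zero p).2 ha]

theorem ContinuousLinearMap.exists_comp_eq_of_ker_le {𝕜 G Z W : Type*}
    [NontriviallyNormedField 𝕜] [NormedAddCommGroup G] [NormedSpace 𝕜 G] [CompleteSpace G]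
    [NormedAddCommGroup Z] [NormedSpace 𝕜 Z] [CompleteSpace Z]
    [AddCommGroup W] [Module 𝕜 W] [TopologicalSpace W]
    (π : G →L[𝕜] Z) (hπ : Function.Surjective π) (φ : G →L[𝕜] W) (h : π.ker ≤ φ.ker) :
    ∃ ψ : Z →L[𝕜] W, ψ.comp π = φ := by
  set ψ : Z →ₗ[𝕜] W := (LinearMap.ker (π : G →ₗ[𝕜] Z)).liftQ φ h ∘ₗ
    ((π : G →ₗ[𝕜] Z).quotKerEquivOfSurjective hπ).symm
  have hψ : ∀ g, ψ (π g) = φ g := fun g => by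
    have hsymm := LinearMap.quotKerEquivOfSurjective_symm_apply (f := (π : G →ₗ[𝕜] Z)) hπ g
    rw [ContinuousLinearMap.coe_coe] at hsymm
    simp [ψ, hsymm]
  have hcont : Continuous ψ := (π.isQuotientMap hπ).continuous_iff.2 <| by
    simpa only [Function.comp_def, hψ] using φ.continuous
  exact ⟨⟨ψ, hcont⟩, ContinuousLinearMap.ext hψ⟩

theorem LinearPMap.IsClosed.exists_strongDual_apply_eq_of_isClosed_range {𝕜 X Y : Type*}
    [RCLike 𝕜] [NormedAddCommGroup X] [NormedSpace 𝕜 X] [CompleteSpace X]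
    [NormedAddCommGroup Y] [NormedSpace 𝕜 Y] [CompleteSpace Y] {A : X →ₗ.[𝕜] Y}
    (hA : A.IsClosed) (hrange : _root_.IsClosed (Set.range fun x : A.domain => A x))
    (φ : StrongDual 𝕜 X) (hφ : ∀ x : A.domain, A x = 0 → φ x = 0) :
    ∃ ψ : StrongDual 𝕜 Y, ∀ x : A.domain, ψ (A x) = φ x := by
  set R := LinearMap.range A.toFun
  have : CompleteSpace A.graph := hA.completeSpace_coe
  have : CompleteSpace R := hrange.completeSpace_coe
  set π : A.graph →L[𝕜] R :=
    ((ContinuousLinearMap.snd 𝕜 X Y).comp A.graph.subtypeL).codRestrict R fun g => by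
      obtain ⟨x, -, hx⟩ := (A.mem_graph_iff).1 g.2
      exact ⟨x, hx⟩
  have hπ : Function.Surjective π := by
    rintro ⟨-, x, rfl⟩
    exact ⟨⟨_, A.mem_graph x⟩, rfl⟩
  have hker : π.ker ≤ (φ.comp ((ContinuousLinearMap.fst 𝕜 X Y).comp A.graph.subtypeL)).ker := by
    rintro ⟨g, hg⟩ hπg
    obtain ⟨x, hx₁, hx₂⟩ := (A.mem_graph_iff).1 hg
    simpa [← hx₁] using hφ x (hx₂.trans (congrArg Subtype.val hπg))
  obtain ⟨ψ₀, hψ₀⟩ := π.exists_comp_eq_of_ker_le hπ _ hker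
  obtain ⟨ψ, hψ, -⟩ := exists_extension_norm_eq R ψ₀
  exact ⟨ψ, fun x => (hψ ⟨A x, x, rfl⟩).trans (DFunLike.congr_fun hψ₀ ⟨_, A.mem_graph x⟩)⟩

namespace IsTranspose

variable {E F : Type*} [NormedAddCommGroup E] [NormedSpace ℝ E]
  [NormedAddCommGroup F] [NormedSpace ℝ F]
  {T : E →ₗ.[ℝ] F} {T' : StrongDual ℝ F →ₗ.[ℝ] StrongDual ℝ E}

theorem mem_graph_iff (hT : IsTranspose T T') (hdense : Dense (T.domain : Set E))
    {σ : StrongDual ℝ F} {τ : StrongDual ℝ E} :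
    (σ, τ) ∈ T'.graph ↔ ∀ x : T.domain, τ x = σ (T x) := by
  refine ⟨?_, fun h => ?_⟩
  · rintro hστ x
    obtain ⟨σ', rfl, rfl⟩ := (T'.mem_graph_iff).1 hστ
    exact hT.apply_eq σ' x
  · have hσ : σ ∈ T'.domain := (hT.mem_domain_iff σ).2 ⟨τ, h⟩
    have hT'σ : T' ⟨σ, hσ⟩ = τ := by
      refine DFunLike.coe_injective (Continuous.ext_on hdense (T' _).continuous τ.continuous ?_)
      intro x hx
      exact (hT.apply_eq ⟨σ, hσ⟩ ⟨x, hx⟩).trans (h ⟨x, hx⟩).symm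
    exact (T'.mem_graph_iff).2 ⟨⟨σ, hσ⟩, rfl, hT'σ⟩

theorem isClosed (hT : IsTranspose T T') (hdense : Dense (T.domain : Set E)) : T'.IsClosed := by
  have hgraph : (T'.graph : Set (StrongDual ℝ F × StrongDual ℝ E)) =
      ⋂ x : T.domain, {p | p.2 x = p.1 (T x)} := by
    ext ⟨σ, τ⟩
    simpa using hT.mem_graph_iff hdense
  rw [LinearPMap.IsClosed, hgraph]
  exact isClosed_iInter fun x => isClosed_eq
    ((ContinuousLinearMap.apply ℝ ℝ (x : E)).continuous.comp continuous_snd)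
    ((ContinuousLinearMap.apply ℝ ℝ (T x)).continuous.comp continuous_fst)

theorem mem_graph_of_forall_apply_eq (hT : IsTranspose T T') (hclosed : T.IsClosed)
    (hdense : Dense (T.domain : Set E)) {x : E} {y : F}
    (h : ∀ σ : T'.domain, T' σ x = (σ : StrongDual ℝ F) y) : (x, y) ∈ T.graph := by
  refine Submodule.mem_of_forall_strongDual_eq_zero hclosed fun f hf => ?_
  set σ := f.comp (ContinuousLinearMap.inr ℝ E F)
  set τ := f.comp (ContinuousLinearMap.inl ℝ E F)
  have hsplit : ∀ v w, f (v, w) = τ v + σ w := fun v w => by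
    simp [σ, τ, ← map_add]
  have hστ : (σ, -τ) ∈ T'.graph := (hT.mem_graph_iff hdense).2 fun v => by
    have hfv := hf _ (T.mem_graph v)
    rw [hsplit] at hfv
    simp only [neg_apply]
    linarith
  obtain ⟨σ', hσ', hT'σ'⟩ := (T'.mem_graph_iff).1 hστ
  have hσ'x := h σ'
  rw [hσ', hT'σ'] at hσ'x
  rw [hsplit, ← hσ'x]
  simp

end IsTranspose

theorem vanishing_from_dual_general
    (E : ℤ → Type*) [∀ q, NormedAddCommGroup (E q)]
    [∀ q, NormedSpace ℝ (E q)]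
    (hrefl : ∀ q, Function.Surjective (NormedSpace.inclusionInDoubleDual ℝ (E q)))
    (d : ∀ q : ℤ, E q →ₗ.[ℝ] E (q+1))
    (hdc : ∀ q, (d q).IsClosed) (hdd : ∀ q, Dense ((d q).domain : Set (E q)))
    (d' : ∀ q : ℤ,
      StrongDual ℝ (E (q+1)) →ₗ.[ℝ] StrongDual ℝ (E q))
    (hd' : ∀ q, IsTranspose (d q) (d' q)) (q : ℤ)
    (hsep : IsClosed (Set.range fun sigma : (d' q).domain => (d' q) sigma))
    (hvanish : ∀ sigma : (d' q).domain, (d' q) sigma = 0 →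
      ∃ tau : (d' (q+1)).domain,
        (d' (q+1)) tau = (sigma : StrongDual ℝ (E (q+1)))) :
    ∀ y : (d (q+1)).domain, (d (q+1)) y = 0 →
      ∃ x : (d q).domain, (d q) x = (y : E (q+1)) := by
  intro y hy
  have hker : ∀ σ : (d' q).domain, d' q σ = 0 → (σ : StrongDual ℝ (E (q+1))) y = 0 := by
    intro σ hσ
    obtain ⟨τ, hτ⟩ := hvanish σ hσ
    simpa [hτ, hy] using (hd' (q+1)).apply_eq τ y
  obtain ⟨ψ, hψ⟩ := ((hd' q).isClosed (hdd q)).exists_strongDual_apply_eq_of_isClosed_range hsep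
    (NormedSpace.inclusionInDoubleDual ℝ (E (q+1)) y) hker
  obtain ⟨x, rfl⟩ := hrefl q ψ
  obtain ⟨x', rfl, hx'⟩ := ((d q).mem_graph_iff).1 <|
    (hd' q).mem_graph_of_forall_apply_eq (hdc q) (hdd q) hψ
  exact ⟨x', hx'⟩

/-- Let `(E^bullet, d)` and `(E'_bullet, d')` be dual complexes of reflexive Banach spaces
with closed densely defined operators.  If `H_q(E'_bullet)` is Hausdorff (the range of
`d'_q` is closed) and `H_(q+1)(E'_bullet) = 0`, then `H^(q+1)(E^bullet) = 0`: every element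
of `ker d^(q+1)` lies in the range of `d^q`. -/
theorem vanishing_from_dual
    (E : ℤ → Type*) [∀ q, NormedAddCommGroup (E q)]
    [∀ q, NormedSpace ℝ (E q)] [∀ q, CompleteSpace (E q)]
    (hrefl : ∀ q, Function.Surjective (NormedSpace.inclusionInDoubleDual ℝ (E q)))
    (d : ∀ q : ℤ, E q →ₗ.[ℝ] E (q+1))
    (hdc : ∀ q, (d q).IsClosed) (hdd : ∀ q, Dense ((d q).domain : Set (E q)))
    (hcomp : ∀ (q : ℤ) (x : (d q).domain) (hx : (d q) x ∈ (d (q+1)).domain),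
      (d (q+1)) ⟨(d q) x, hx⟩ = 0)
    (d' : ∀ q : ℤ,
      StrongDual ℝ (E (q+1)) →ₗ.[ℝ] StrongDual ℝ (E q))
    (hd' : ∀ q, IsTranspose (d q) (d' q)) (q : ℤ)
    (hsep : IsClosed (Set.range fun sigma : (d' q).domain => (d' q) sigma))
    (hvanish : ∀ sigma : (d' q).domain, (d' q) sigma = 0 →
      ∃ tau : (d' (q+1)).domain,
        (d' (q+1)) tau = (sigma : StrongDual ℝ (E (q+1)))) :
    ∀ y : (d (q+1)).domain, (d (q+1)) y = 0 →
      ∃ x : (d q).domain, (d q) x = (y : E (q+1)) :=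
  vanishing_from_dual_general E hrefl d hdc hdd d' hd' q hsep hvanish
end
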